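/- arXiv:1605.03158 — 4 statements merged into one kernel-verified Lean document; each statement's English description precedes it below -/
import Mathlib

section
/- Let C₁, C₂ be two disjoint chains with chain-successor edges, and H a set of horizontal edges between them. Two horizontal edges h₁ = (u₁,v₁) with u₁ ∈ C₁, v₁ ∈ C₂ and h₂ = (u₂,v₂) with u₂ ∈ C₂, v₂ ∈ C₁ cross (i.e., create a directed cycle together with the chain edges) if and only if v₂ ≤ u₁ in the order of C₁ and v₁ ≤ u₂ in the order of C₂. -/
/-!
If `u₁ < v₂`, listing `C₁` up to `u₁`, then `C₂`, then the rest of `C₁` is a topological order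
of the graph, so it has no cycle; the case `u₂ < v₁` is the same after swapping the two chains.
Conversely, if `v₂ ≤ u₁` and `v₁ ≤ u₂`, the path `v₂, …, u₁` in `C₁` followed by the path
`v₁, …, u₂` in `C₂` closes up into a cycle through both horizontal edges.
-/

/-- A directed simple cycle in the digraph given by relation `r`. -/
def IsCycle {V : Type*} (r : V → V → Prop) (l : List V) : Prop :=
  l ≠ [] ∧ l.Nodup ∧
    ∀ i : Fin l.length, r (l.get i) (l.get ⟨((i : ℕ) + 1) % l.length, Nat.mod_lt _ i.pos⟩)

/-- Chain-successor edges of two disjoint chains `C₁ = Fin m` and `C₂ = Fin k`. -/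
def chainEdge {m k : ℕ} : Fin m ⊕ Fin k → Fin m ⊕ Fin k → Prop
  | Sum.inl i, Sum.inl j => (i : ℕ) + 1 = (j : ℕ)
  | Sum.inr i, Sum.inr j => (i : ℕ) + 1 = (j : ℕ)
  | _, _ => False

theorem isCycle_iff_chain {V : Type*} {r : V → V → Prop} {l : List V} :
    IsCycle r l ↔ l ≠ [] ∧ l.Nodup ∧ Cycle.Chain r (l : Cycle V) := by
  refine and_congr_right fun hne => and_congr_right fun _ => ?_
  rw [Cycle.chain_ne_nil r hne, List.isChain_iff_getElem]
  have hlen : 0 < l.length := List.length_pos_of_ne_nil hne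
  constructor
  · rintro h (_ | i) hi
    · simpa [List.getLast_eq_getElem, Nat.sub_add_cancel hlen] using h ⟨l.length - 1, by omega⟩
    · simp only [List.length_cons] at hi
      simpa [Nat.mod_eq_of_lt (show i + 1 < l.length by omega)] using h ⟨i, by omega⟩
  · rintro h ⟨i, hi⟩
    rcases Nat.lt_or_ge (i + 1) l.length with hlt | hge
    · have := h (i + 1) (by rw [List.length_cons]; omega)
      simp only [List.getElem_cons_succ] at this
      simpa [Nat.mod_eq_of_lt hlt] using this
    · obtain rfl : i = l.length - 1 := by omega
      simpa [List.getLast_eq_getElem, Nat.sub_add_cancel hlen] using h 0 (by simpa using hlen)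

theorem Cycle.chain_coe_iff {α : Type*} {r : α → α → Prop} (l : List α) :
    Cycle.Chain r (l : Cycle α) ↔ l.IsChain r ∧ ∀ x ∈ l.getLast?, ∀ y ∈ l.head?, r x y := by
  cases l with
  | nil => simp
  | cons a t =>
    rw [Cycle.chain_coe_cons, ← List.cons_append, List.isChain_append]
    simp

theorem not_isCycle_of_lt {V β : Type*} [Preorder β] {r : V → V → Prop} (φ : V → β)
    (hφ : ∀ a b, r a b → φ a < φ b) (l : List V) : ¬ IsCycle r l := by
  intro hl
  obtain ⟨hne, -, hchain⟩ := isCycle_iff_chain.1 hl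
  have : IsTrans V (fun a b => φ a < φ b) := ⟨fun _ _ _ => lt_trans⟩
  obtain ⟨a, ha⟩ := List.exists_mem_of_ne_nil l hne
  have ha' : a ∈ (l : Cycle V) := Cycle.mem_coe_iff.2 ha
  exact lt_irrefl _ (Cycle.chain_iff_pairwise.1 (hchain.imp hφ) a ha' a ha')

theorem IsCycle.map {V W : Type*} {r : V → V → Prop} {s : W → W → Prop} {l : List V} {f : V → W}
    (hl : IsCycle r l) (hf : Function.Injective f) (hrs : ∀ a b, r a b → s (f a) (f b)) :
    IsCycle s (l.map f) := by
  obtain ⟨hne, hnodup, hchain⟩ := isCycle_iff_chain.1 hl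
  refine isCycle_iff_chain.2 ⟨by simpa using hne, hnodup.map hf, ?_⟩
  rw [← Cycle.map_coe, Cycle.chain_map]
  exact hchain.imp hrs

namespace Fin

def intervalList {n : ℕ} (a b : Fin n) : List (Fin n) :=
  List.ofFn fun t : Fin ((b : ℕ) - a + 1) => ⟨a + t, by omega⟩

variable {n : ℕ} (a b : Fin n)

theorem head?_intervalList : (intervalList a b).head? = some a := by
  simp [intervalList, List.ofFn_succ]

theorem getLast?_intervalList (h : a ≤ b) : (intervalList a b).getLast? = some b := by
  rw [intervalList, List.getLast?_eq_getElem?]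
  simp only [List.length_ofFn, Nat.add_sub_cancel, List.getElem?_ofFn]
  simp only [lt_add_iff_pos_right, Order.lt_one_iff, reduceDIte, Option.some.injEq, Fin.ext_iff]
  omega

theorem isChain_intervalList : (intervalList a b).IsChain fun i j : Fin n => (i : ℕ) + 1 = j := by
  rw [intervalList, List.isChain_iff_getElem]
  intro i hi
  simp only [List.getElem_ofFn]
  omega

theorem nodup_intervalList : (intervalList a b).Nodup := by
  exact List.nodup_ofFn.2 fun s t h => Fin.ext (Nat.add_left_cancel (congrArg Fin.val h))

end Fin

section Crossing

variable {m k : ℕ}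

def crossingEdge (u₁ v₂ : Fin m) (v₁ u₂ : Fin k) (a b : Fin m ⊕ Fin k) : Prop :=
  chainEdge a b ∨
    (a, b) = ((Sum.inl u₁ : Fin m ⊕ Fin k), (Sum.inr v₁ : Fin m ⊕ Fin k)) ∨
    (a, b) = ((Sum.inr u₂ : Fin m ⊕ Fin k), (Sum.inl v₂ : Fin m ⊕ Fin k))

theorem crossingEdge_swap {u₁ v₂ : Fin m} {v₁ u₂ : Fin k} {a b : Fin m ⊕ Fin k}
    (h : crossingEdge u₁ v₂ v₁ u₂ a b) : crossingEdge u₂ v₁ v₂ u₁ a.swap b.swap := by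
  rcases a with i | i <;> rcases b with j | j <;>
    simp_all [crossingEdge, chainEdge, or_comm]

theorem le_of_isCycle_crossingEdge {u₁ v₂ : Fin m} {v₁ u₂ : Fin k} {l : List (Fin m ⊕ Fin k)}
    (hl : IsCycle (crossingEdge u₁ v₂ v₁ u₂) l) : v₂ ≤ u₁ := by
  by_contra! h
  refine not_isCycle_of_lt (Sum.elim (fun i : Fin m => if (i : ℕ) ≤ u₁ then (i : ℕ) else i + k)
    fun j : Fin k => u₁ + 1 + j) ?_ l hl
  rintro (i | j) (i' | j') (hij | hij | hij) <;>
    simp_all [chainEdge] <;> (try split_ifs) <;> omega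

theorem isCycle_crossingEdge {u₁ v₂ : Fin m} {v₁ u₂ : Fin k} (h₁ : v₂ ≤ u₁) (h₂ : v₁ ≤ u₂) :
    IsCycle (crossingEdge u₁ v₂ v₁ u₂)
      ((Fin.intervalList v₂ u₁).map Sum.inl ++ (Fin.intervalList v₁ u₂).map Sum.inr) := by
  refine isCycle_iff_chain.2 ⟨by simp [Fin.intervalList], ?_, ?_⟩
  · exact ((Fin.nodup_intervalList _ _).map Sum.inl_injective).append
      ((Fin.nodup_intervalList _ _).map Sum.inr_injective) (by simp [List.Disjoint])
  · rw [Cycle.chain_coe_iff, List.isChain_append, List.isChain_map, List.isChain_map]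
    simp only [List.getLast?_append, List.getLast?_map, List.head?_append, List.head?_map,
      Fin.head?_intervalList, Fin.getLast?_intervalList, h₁, h₂, Option.map_some, Option.or_some,
      Option.getD_some, Option.mem_def, Option.some.injEq, forall_eq']
    refine ⟨⟨?_, ?_, .inr (.inl rfl)⟩, .inr (.inr rfl)⟩
    · exact (Fin.isChain_intervalList v₂ u₁).imp fun _ _ => .inl
    · exact (Fin.isChain_intervalList v₁ u₂).imp fun _ _ => .inl

end Crossing

/-- the horizontal edges `h₁ = (u₁, v₁)` (from `C₁` to `C₂`) and
`h₂ = (u₂, v₂)` (from `C₂` to `C₁`) cross — i.e. the chain-successor edges plus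
these two edges contain a directed cycle — if and only if `v₂ ≤ u₁` in the order
of `C₁` and `v₁ ≤ u₂` in the order of `C₂`. -/
theorem crossing_characterization (m k : ℕ) (u₁ v₂ : Fin m) (v₁ u₂ : Fin k) :
    (∃ l : List (Fin m ⊕ Fin k),
      IsCycle (fun a b => chainEdge a b ∨
        (a, b) = ((Sum.inl u₁ : Fin m ⊕ Fin k), (Sum.inr v₁ : Fin m ⊕ Fin k)) ∨
        (a, b) = ((Sum.inr u₂ : Fin m ⊕ Fin k), (Sum.inl v₂ : Fin m ⊕ Fin k))) l)
    ↔ (v₂ ≤ u₁ ∧ v₁ ≤ u₂) := by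
  constructor
  · rintro ⟨l, hl⟩
    have hswap := hl.map Sum.swap_leftInverse.injective fun _ _ => crossingEdge_swap
    exact ⟨le_of_isCycle_crossingEdge hl, le_of_isCycle_crossingEdge hswap⟩
  · rintro ⟨h₁, h₂⟩
    exact ⟨_, isCycle_crossingEdge h₁ h₂⟩
end

section
/- Let C₁, C₂ be two disjoint chains with chain-successor edges and H a set of horizontal edges. A subset S ⊆ H is safely updatable (the graph of chain-successor edges plus S is acyclic) if and only if S is an independent set in the crossing graph G'. Consequently, a maximum safely-updatable subset of H has size |H| minus the size of a minimum vertex cover of G'. -/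
/-- Two horizontal edges cross if the chain edges plus the two of them contain a
directed cycle. -/
def Crosses {m k : ℕ} (h₁ h₂ : (Fin m ⊕ Fin k) × (Fin m ⊕ Fin k)) : Prop :=
  ∃ l, IsCycle (fun a b => chainEdge a b ∨ (a, b) = h₁ ∨ (a, b) = h₂) l

/-- A set `S` of horizontal edges is safely updatable if the chain-successor
edges together with `S` form an acyclic digraph. -/
def Safe {m k : ℕ} (S : Finset ((Fin m ⊕ Fin k) × (Fin m ⊕ Fin k))) : Prop :=
  ∀ l, ¬ IsCycle (fun a b => chainEdge a b ∨ (a, b) ∈ S) l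

open Function

theorem IsCycle.mono {V : Type*} {r r' : V → V → Prop} (h : ∀ a b, r a b → r' a b)
    {l : List V} (hc : IsCycle r l) : IsCycle r' l :=
  ⟨hc.1, hc.2.1, fun i => h _ _ (hc.2.2 i)⟩

theorem IsCycle.exists_periodic_walk {V : Type*} {r : V → V → Prop} {l : List V}
    (hc : IsCycle r l) :
    ∃ (f : ℕ → V) (n : ℕ), 0 < n ∧ Periodic f n ∧ ∀ t, r (f t) (f (t + 1)) := by
  have hpos : 0 < l.length := List.length_pos_iff_ne_nil.mpr hc.1
  refine ⟨fun t => l.get ⟨t % l.length, Nat.mod_lt _ hpos⟩, l.length, hpos,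
    fun t => congrArg l.get (Fin.ext (Nat.add_mod_right _ _)), fun t => ?_⟩
  simpa only [Fin.val_mk, Nat.mod_add_mod] using hc.2.2 ⟨t % l.length, Nat.mod_lt _ hpos⟩

theorem isCycle_ofFn {V : Type*} {r : V → V → Prop} {n : ℕ} {g : Fin (n + 1) → V}
    (hg : Injective g) (hstep : ∀ i : Fin n, r (g i.castSucc) (g i.succ))
    (hlast : r (g (Fin.last n)) (g 0)) : IsCycle r (List.ofFn g) := by
  refine ⟨by simp, List.nodup_ofFn.mpr hg, fun i => ?_⟩
  have hlen : (List.ofFn g).length = n + 1 := List.length_ofFn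
  simp only [List.get_ofFn]
  rcases (Fin.cast hlen i).eq_castSucc_or_eq_last with ⟨j, hj⟩ | hi
  · convert hstep j using 2
    simp only [Fin.ext_iff, Fin.val_cast, Fin.val_castSucc] at hj
    simp only [Fin.ext_iff, Fin.val_cast, Fin.val_succ, hlen, hj]
    exact Nat.mod_eq_of_lt (by omega)
  · simp only [Fin.ext_iff, Fin.val_cast, Fin.val_last] at hi
    convert hlast using 2 <;> simp [Fin.ext_iff, hi]

theorem Function.Periodic.exists_exit {V : Type*} {r : V → V → Prop} {P : V → Prop}
    {φ : V → ℕ} {f : ℕ → V} {n : ℕ} (hper : Periodic f n) (hn : 0 < n)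
    (hf : ∀ t, r (f t) (f (t + 1))) (hφ : ∀ a b, r a b → P a → P b → φ a < φ b)
    {p : ℕ} (hp : P (f p)) : ∃ t, P (f t) ∧ ¬ P (f (t + 1)) ∧ φ (f p) ≤ φ (f t) := by
  by_contra! hstay
  have climb : ∀ s, P (f (p + s)) ∧ φ (f p) + s ≤ φ (f (p + s)) := by
    intro s
    induction s with
    | zero => exact ⟨hp, le_rfl⟩
    | succ s ih =>
      have hin : P (f (p + (s + 1))) := by
        by_contra hout
        have := hstay _ ih.1 hout
        omega
      have : φ (f (p + s)) < φ (f (p + (s + 1))) := hφ _ _ (hf _) ih.1 hin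
      exact ⟨hin, by omega⟩
  have := (climb n).2
  rw [hper p] at this
  omega

open Sum

theorem crosses_of_le {m k : ℕ} {x x' : Fin m} {y y' : Fin k} (hx : x' ≤ x) (hy : y ≤ y') :
    Crosses (inl x, inr y) (inr y', inl x') := by
  set a := (x : ℕ) - x' with ha
  set b := (y' : ℕ) - y with hb
  clear_value a b
  have hxm := x.isLt
  have hyk := y'.isLt
  -- the cycle x' → ⋯ → x → y → ⋯ → y' → x'
  let g : Fin (a + b + 2) → Fin m ⊕ Fin k := fun i =>
    if h : (i : ℕ) ≤ a then inl ⟨x' + i, by omega⟩ else inr ⟨y + (i - (a + 1)), by omega⟩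
  refine ⟨List.ofFn g, isCycle_ofFn (fun i j hij => ?_) (fun i => ?_) ?_⟩
  · simp only [g] at hij
    split_ifs at hij <;> simp only [inl.injEq, inr.injEq, Fin.mk.injEq] at hij
    all_goals exact Fin.ext (by omega)
  · simp only [g, Fin.val_castSucc, Fin.val_succ]
    split_ifs <;> simp only [chainEdge, Prod.mk.injEq, inl.injEq, inr.injEq, Fin.ext_iff,
      reduceCtorEq, false_and, and_false, or_false] <;> omega
  · simp only [g, Fin.val_last, Fin.val_zero, dif_neg (show ¬ a + b + 1 ≤ a by omega),
      zero_le, ↓reduceDIte]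
    right; right
    simp only [Prod.mk.injEq, inr.injEq, inl.injEq, Fin.ext_iff]
    omega

section Chains

variable {m k : ℕ} {S : Finset ((Fin m ⊕ Fin k) × (Fin m ⊕ Fin k))} {f : ℕ → Fin m ⊕ Fin k}
  {n : ℕ}

theorem not_chainEdge_of_isLeft_ne {a b : Fin m ⊕ Fin k} (h : a.isLeft ≠ b.isLeft) :
    ¬ chainEdge a b := by
  rcases a with _ | _ <;> rcases b with _ | _ <;> simp_all [chainEdge]

theorem val_succ_of_step_inl (hS : ∀ e ∈ S, e.1.isLeft ≠ e.2.isLeft) {i j : Fin m}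
    (h : chainEdge (inl i : Fin m ⊕ Fin k) (inl j) ∨ (inl i, inl j) ∈ S) : (i : ℕ) + 1 = j :=
  h.elim id fun h => absurd (hS _ h) (by simp)

theorem val_succ_of_step_inr (hS : ∀ e ∈ S, e.1.isLeft ≠ e.2.isLeft) {i j : Fin k}
    (h : chainEdge (inr i : Fin m ⊕ Fin k) (inr j) ∨ (inr i, inr j) ∈ S) : (i : ℕ) + 1 = j :=
  h.elim id fun h => absurd (hS _ h) (by simp)

theorem exists_exit_left (hS : ∀ e ∈ S, e.1.isLeft ≠ e.2.isLeft) (hper : Periodic f n)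
    (hn : 0 < n) (hf : ∀ t, chainEdge (f t) (f (t + 1)) ∨ (f t, f (t + 1)) ∈ S) {p : ℕ}
    {x : Fin m} (hp : f p = inl x) :
    ∃ t x' y', f t = inl x' ∧ f (t + 1) = inr y' ∧ x ≤ x' := by
  have climb : ∀ a b, chainEdge a b ∨ (a, b) ∈ S → a.isLeft → b.isLeft →
      Sum.elim Fin.val (fun _ => 0) a < Sum.elim Fin.val (fun _ => 0) b := by
    intro a b hab ha hb
    obtain ⟨i, rfl⟩ := isLeft_iff.mp ha
    obtain ⟨j, rfl⟩ := isLeft_iff.mp hb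
    simp [← val_succ_of_step_inl hS hab]
  obtain ⟨t, hin, hout, hle⟩ := hper.exists_exit hn hf climb (p := p) (by simp [hp])
  obtain ⟨x', ht⟩ := isLeft_iff.mp hin
  obtain ⟨y', ht1⟩ := isRight_iff.mp (not_isLeft.mp hout)
  exact ⟨t, x', y', ht, ht1, by simpa [hp, ht] using hle⟩

theorem exists_exit_right (hS : ∀ e ∈ S, e.1.isLeft ≠ e.2.isLeft) (hper : Periodic f n)
    (hn : 0 < n) (hf : ∀ t, chainEdge (f t) (f (t + 1)) ∨ (f t, f (t + 1)) ∈ S) {p : ℕ}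
    {y : Fin k} (hp : f p = inr y) :
    ∃ t y' x', f t = inr y' ∧ f (t + 1) = inl x' ∧ y ≤ y' := by
  have climb : ∀ a b, chainEdge a b ∨ (a, b) ∈ S → a.isRight → b.isRight →
      Sum.elim (fun _ => 0) Fin.val a < Sum.elim (fun _ => 0) Fin.val b := by
    intro a b hab ha hb
    obtain ⟨i, rfl⟩ := isRight_iff.mp ha
    obtain ⟨j, rfl⟩ := isRight_iff.mp hb
    simp [← val_succ_of_step_inr hS hab]
  obtain ⟨t, hin, hout, hle⟩ := hper.exists_exit hn hf climb (p := p) (by simp [hp])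
  obtain ⟨y', ht⟩ := isRight_iff.mp hin
  obtain ⟨x', ht1⟩ := isLeft_iff.mp (not_isRight.mp hout)
  exact ⟨t, y', x', ht, ht1, by simpa [hp, ht] using hle⟩

theorem exists_crosses_of_periodic_walk (hS : ∀ e ∈ S, e.1.isLeft ≠ e.2.isLeft)
    (hper : Periodic f n) (hn : 0 < n)
    (hf : ∀ t, chainEdge (f t) (f (t + 1)) ∨ (f t, f (t + 1)) ∈ S) :
    ∃ h₁ ∈ S, ∃ h₂ ∈ S, Crosses h₁ h₂ := by
  have mem_of_step {t : ℕ} {a b : Fin m ⊕ Fin k} (ha : f t = a) (hb : f (t + 1) = b)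
      (hab : a.isLeft ≠ b.isLeft) : (a, b) ∈ S := by
    rw [← ha, ← hb]
    exact (hf t).resolve_left (by rw [ha, hb]; exact not_chainEdge_of_isLeft_ne hab)
  let X : Set (Fin m) := {x | ∃ t y, f t = inl x ∧ f (t + 1) = inr y}
  have hX : X.Nonempty := by
    have of_inl {p : ℕ} {x : Fin m} (hp : f p = inl x) : X.Nonempty :=
      let ⟨t, x', y', ht, ht1, _⟩ := exists_exit_left hS hper hn hf hp
      ⟨x', t, y', ht, ht1⟩
    rcases h0 : f 0 with x | y
    · exact of_inl h0
    · obtain ⟨t, -, x', -, ht1, -⟩ := exists_exit_right hS hper hn hf h0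
      exact of_inl ht1
  obtain ⟨x, ⟨t₀, y, hx, hy⟩, hmax⟩ := Set.exists_max_image X id X.toFinite hX
  obtain ⟨t₁, y', x', hy', hx', hyy'⟩ := exists_exit_right hS hper hn hf hy
  obtain ⟨t₂, x₁, y₁, hx₁, hy₁, hxx₁⟩ := exists_exit_left hS hper hn hf hx'
  have hx₁x : x₁ ≤ x := hmax x₁ ⟨t₂, y₁, hx₁, hy₁⟩
  exact ⟨_, mem_of_step hx hy (by simp), _, mem_of_step hy' hx' (by simp),
    crosses_of_le (hxx₁.trans hx₁x) hyy'⟩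

theorem safe_iff_forall_not_crosses (hS : ∀ e ∈ S, e.1.isLeft ≠ e.2.isLeft) :
    Safe S ↔ ∀ h₁ ∈ S, ∀ h₂ ∈ S, ¬ Crosses h₁ h₂ := by
  constructor
  · rintro hsafe h₁ h₁S h₂ h₂S ⟨l, hl⟩
    exact hsafe l (hl.mono fun a b => Or.imp_right (by rintro (rfl | rfl) <;> assumption))
  · intro hindep l hl
    obtain ⟨f, n, hn, hper, hf⟩ := hl.exists_periodic_walk
    obtain ⟨h₁, h₁S, h₂, h₂S, hcross⟩ := exists_crosses_of_periodic_walk hS hper hn hf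
    exact hindep h₁ h₁S h₂ h₂S hcross

end Chains

theorem covers_sdiff_iff_independent {α : Type*} [DecidableEq α] {R : α → α → Prop}
    {H S : Finset α} (hSH : S ⊆ H) :
    (∀ a ∈ H, ∀ b ∈ H, R a b → a ∈ H \ S ∨ b ∈ H \ S) ↔ ∀ a ∈ S, ∀ b ∈ S, ¬ R a b := by
  simp only [Finset.mem_sdiff]
  grind

theorem sSup_card_independent_eq_card_sub_sInf_card_cover {α : Type*} (R : α → α → Prop)
    (H : Finset α) :
    sSup {n : ℕ | ∃ S ⊆ H, (∀ a ∈ S, ∀ b ∈ S, ¬ R a b) ∧ S.card = n} =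
      H.card - sInf {n : ℕ | ∃ T ⊆ H,
        (∀ a ∈ H, ∀ b ∈ H, R a b → a ∈ T ∨ b ∈ T) ∧ T.card = n} := by
  classical
  set covers := {n : ℕ | ∃ T ⊆ H, (∀ a ∈ H, ∀ b ∈ H, R a b → a ∈ T ∨ b ∈ T) ∧ T.card = n}
  obtain ⟨T, hTH, hT, hTcard⟩ : sInf covers ∈ covers :=
    Nat.sInf_mem ⟨H.card, H, subset_rfl, fun a ha _ _ _ => Or.inl ha, rfl⟩
  refine IsGreatest.csSup_eq ⟨⟨H \ T, Finset.sdiff_subset, ?_, ?_⟩, ?_⟩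
  · exact (covers_sdiff_iff_independent Finset.sdiff_subset).mp
      (by rwa [Finset.sdiff_sdiff_eq_self hTH])
  · rw [Finset.card_sdiff_of_subset hTH, hTcard]
  · rintro _ ⟨S, hSH, hS, rfl⟩
    have : sInf covers ≤ H.card - S.card :=
      Nat.sInf_le ⟨H \ S, Finset.sdiff_subset, (covers_sdiff_iff_independent hSH).mpr hS,
        Finset.card_sdiff_of_subset hSH⟩
    have := Finset.card_le_card hSH
    omega

/-- a subset `S ⊆ H` of horizontal edges is safely updatable iff it
is an independent set in the crossing graph `G'`; consequently, the maximum size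
of a safely updatable subset of `H` equals `|H|` minus the minimum size of a
vertex cover of `G'`. -/
theorem safe_iff_independent_and_duality (m k : ℕ)
    (H : Finset ((Fin m ⊕ Fin k) × (Fin m ⊕ Fin k)))
    (hH : ∀ e ∈ H, (e.1.isLeft = true ∧ e.2.isRight = true) ∨
                   (e.1.isRight = true ∧ e.2.isLeft = true)) :
    (∀ S ⊆ H, (Safe S ↔ ∀ h₁ ∈ S, ∀ h₂ ∈ S, ¬ Crosses h₁ h₂)) ∧
    sSup {n : ℕ | ∃ S ⊆ H, Safe S ∧ S.card = n} =
      H.card - sInf {n : ℕ | ∃ T ⊆ H,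
        (∀ h₁ ∈ H, ∀ h₂ ∈ H, Crosses h₁ h₂ → h₁ ∈ T ∨ h₂ ∈ T) ∧ T.card = n} := by
  have horizontal : ∀ S ⊆ H, ∀ e ∈ S, e.1.isLeft ≠ e.2.isLeft := fun S hSH e he => by
    rcases hH e (hSH he) with ⟨h₁, h₂⟩ | ⟨h₁, h₂⟩ <;> simp_all
  have key : ∀ S ⊆ H, (Safe S ↔ ∀ h₁ ∈ S, ∀ h₂ ∈ S, ¬ Crosses h₁ h₂) :=
    fun S hSH => safe_iff_forall_not_crosses (horizontal S hSH)
  refine ⟨key, ?_⟩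
  have safe_eq_independent : {n : ℕ | ∃ S ⊆ H, Safe S ∧ S.card = n} =
      {n : ℕ | ∃ S ⊆ H, (∀ h₁ ∈ S, ∀ h₂ ∈ S, ¬ Crosses h₁ h₂) ∧ S.card = n} :=
    Set.ext fun _ => exists_congr fun S => and_congr_right fun hSH => and_congr_left' (key S hSH)
  rw [safe_eq_independent]
  exact sSup_card_independent_eq_card_sub_sInf_card_cover Crosses H
end

section
/- Let H be a finite set of horizontal edges between two chains, partitioned into H₁ (edges from chain 1 to chain 2) and H₂ (edges from chain 2 to chain 1). Since every crossing pair consists of one edge of H₁ and one edge of H₂, at least one of H₁, H₂ is a safely updatable set (contains no crossing pair), and hence the maximum safely updatable subset of H has size at least |H|/2. -/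
/-- If a rank function strictly increases along every edge, there is no cycle. -/
lemma no_cycle_of_mono {V : Type*} (r : V → V → Prop) (φ : V → ℕ)
    (h : ∀ a b, r a b → φ a < φ b) (l : List V) : ¬ IsCycle r l := by
  rintro ⟨hne, _, hstep⟩
  have hn : 0 < l.length := List.length_pos_iff.mpr hne
  have key : ∀ n (hlt : n < l.length), φ (l.get ⟨0, hn⟩) ≤ φ (l.get ⟨n, hlt⟩) := by
    intro n
    induction n with
    | zero => intro _; exact le_refl _
    | succ n ih =>
      intro hlt
      have hn' : n < l.length := Nat.lt_of_succ_lt hlt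
      have := h _ _ (hstep ⟨n, hn'⟩)
      have heq : l.get ⟨(n + 1) % l.length, Nat.mod_lt _ hn⟩ = l.get ⟨n + 1, hlt⟩ := by
        congr 1
        exact Fin.ext (Nat.mod_eq_of_lt hlt)
      rw [heq] at this
      exact le_trans (ih hn') (le_of_lt this)
  have hlast : l.length - 1 < l.length := Nat.sub_lt hn one_pos
  have := h _ _ (hstep ⟨l.length - 1, hlast⟩)
  have hmod : (l.length - 1 + 1) % l.length = 0 := by
    rw [Nat.sub_add_cancel hn, Nat.mod_self]
  have heq : l.get ⟨(l.length - 1 + 1) % l.length, Nat.mod_lt _ hn⟩ = l.get ⟨0, hn⟩ := by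
    congr 1
    exact Fin.ext hmod
  rw [heq] at this
  exact absurd (key _ hlast) (not_le.mpr this)

lemma safe_left {m k : ℕ} (H : Finset ((Fin m ⊕ Fin k) × (Fin m ⊕ Fin k)))
    (hH : ∀ e ∈ H, (e.1.isLeft = true ∧ e.2.isRight = true) ∨
                   (e.1.isRight = true ∧ e.2.isLeft = true)) :
    Safe (H.filter fun e => e.1.isLeft = true) := by
  intro l
  refine no_cycle_of_mono _ (Sum.elim (fun i : Fin m => (i : ℕ)) (fun j : Fin k => m + (j : ℕ))) ?_ l
  rintro a b (hc | hs)
  · cases a with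
    | inl i => cases b with
      | inl j => simpa using Nat.lt_of_lt_of_le (Nat.lt_succ_self i) (le_of_eq hc)
      | inr j => exact absurd hc (by simp [chainEdge])
    | inr i => cases b with
      | inl j => exact absurd hc (by simp [chainEdge])
      | inr j => simpa using Nat.lt_of_lt_of_le (Nat.lt_succ_self (i : ℕ)) (le_of_eq hc)
  · rw [Finset.mem_filter] at hs
    obtain ⟨hmem, hleft⟩ := hs
    rcases hH _ hmem with ⟨_, hr⟩ | ⟨hr, _⟩
    · cases a with
      | inl i => cases b with
        | inl j => simp at hr
        | inr j => simp; omega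
      | inr i => simp at hleft
    · cases a with
      | inl i => simp at hr
      | inr i => simp at hleft

lemma safe_right {m k : ℕ} (H : Finset ((Fin m ⊕ Fin k) × (Fin m ⊕ Fin k)))
    (hH : ∀ e ∈ H, (e.1.isLeft = true ∧ e.2.isRight = true) ∨
                   (e.1.isRight = true ∧ e.2.isLeft = true)) :
    Safe (H.filter fun e => e.1.isRight = true) := by
  intro l
  refine no_cycle_of_mono _ (Sum.elim (fun i : Fin m => k + (i : ℕ)) (fun j : Fin k => (j : ℕ))) ?_ l
  rintro a b (hc | hs)
  · cases a with
    | inl i => cases b with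
      | inl j => simpa using Nat.lt_of_lt_of_le (Nat.lt_succ_self (i : ℕ)) (le_of_eq hc)
      | inr j => exact absurd hc (by simp [chainEdge])
    | inr i => cases b with
      | inl j => exact absurd hc (by simp [chainEdge])
      | inr j => simpa using Nat.lt_of_lt_of_le (Nat.lt_succ_self (i : ℕ)) (le_of_eq hc)
  · rw [Finset.mem_filter] at hs
    obtain ⟨hmem, hright⟩ := hs
    rcases hH _ hmem with ⟨hl, _⟩ | ⟨_, hl⟩
    · cases a with
      | inl i => simp at hright
      | inr i => simp at hl
    · cases a with
      | inl i => simp at hright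
      | inr i => cases b with
        | inl j => simp; omega
        | inr j => simp at hl

/-- partition the horizontal edges `H` into `H₁` (edges from chain 1
to chain 2) and `H₂` (edges from chain 2 to chain 1).  At least one of `H₁, H₂`
is a safely updatable set, and hence there is a safely updatable subset of `H`
of size at least `|H|/2`. -/
theorem half_approximation_two_chains (m k : ℕ)
    (H : Finset ((Fin m ⊕ Fin k) × (Fin m ⊕ Fin k)))
    (hH : ∀ e ∈ H, (e.1.isLeft = true ∧ e.2.isRight = true) ∨
                   (e.1.isRight = true ∧ e.2.isLeft = true)) :
    (Safe (H.filter fun e => e.1.isLeft = true) ∨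
     Safe (H.filter fun e => e.1.isRight = true)) ∧
    ∃ S ⊆ H, Safe S ∧ 2 * S.card ≥ H.card := by
  refine ⟨Or.inl (safe_left H hH), ?_⟩
  set H₁ := H.filter fun e => e.1.isLeft = true with hH₁
  set H₂ := H.filter fun e => e.1.isRight = true with hH₂
  have hcard : H₁.card + H₂.card = H.card := by
    have hbase := Finset.card_filter_add_card_filter_not
      (s := H) (p := fun e => e.1.isLeft = true)
    have heq : H.filter (fun e => ¬ e.1.isLeft = true) = H₂ := by
      apply Finset.filter_congr
      intro e _
      cases e.1 <;> simp
    rw [heq, ← hH₁] at hbase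
    omega
  rcases le_total H₁.card H₂.card with h | h
  · exact ⟨H₂, Finset.filter_subset _ _, safe_right H hH, by omega⟩
  · exact ⟨H₁, Finset.filter_subset _ _, safe_left H hH, by omega⟩
end

section
/- Let π₁ and π₂ be two simple directed paths from s to d on vertex set V inducing orders, and consider a one-round update schedule U₁,…,U_k (a partition of the to-be-updated nodes). The schedule updating nodes one at a time from the destination backwards along π₂ — i.e., U_t = {the t-th node of π₂ counted from d among nodes needing update} — is a valid strongly loop-free update schedule: at every round t and for every subset X ⊆ U_t, the forwarding graph with new edges for U_{<t} ∪ X and old edges elsewhere is acyclic. -/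
/-- Old edges of `π₁`: `a → a + 1` in the order of `π₁` (vertices are `Fin n`,
ordered along `π₁`). -/
def oldEdge {n : ℕ} (a b : Fin n) : Prop := (a : ℕ) + 1 = (b : ℕ)

/-- New edges of `π₂`, the path `σ ⟨0⟩, σ ⟨1⟩, …, σ ⟨n-1⟩`. -/
def newEdge {n : ℕ} (σ : Equiv.Perm (Fin n)) (a b : Fin n) : Prop :=
  ∃ k : ℕ, ∃ hk : k + 1 < n, σ ⟨k, Nat.lt_of_succ_lt hk⟩ = a ∧ σ ⟨k + 1, hk⟩ = b

/-- A potential that strictly increases along every step of a cyclic list is impossible. -/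
lemma no_incr_cycle {V : Type*} (f : V → ℕ) (l : List V) (hne : l ≠ [])
    (h : ∀ i : Fin l.length,
      f (l.get i) < f (l.get ⟨((i : ℕ) + 1) % l.length, Nat.mod_lt _ i.pos⟩)) : False := by
  have hlen : 0 < l.length := List.length_pos_iff.mpr hne
  obtain ⟨i, -, hi⟩ := Finset.exists_max_image (Finset.univ : Finset (Fin l.length))
    (fun i => f (l.get i)) ⟨⟨0, hlen⟩, Finset.mem_univ _⟩
  exact absurd (hi _ (Finset.mem_univ _)) (not_le.mpr (h i))

/-- updating the nodes that need updating one at a time, from the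
destination backwards along `π₂`, is a strongly loop-free update schedule.
Equivalently: for every set `W` of already-updated (or in-flight) nodes arising
from this schedule — i.e. every `W ⊆ U` that is closed under taking nodes of `U`
lying later on `π₂` (closer to `d`) — the forwarding graph that uses the new
outgoing edge for nodes in `W` and the old outgoing edge for all other nodes is
acyclic. -/
theorem dest_to_source_schedule_strongly_loop_free (n : ℕ) (hn : 1 ≤ n)
    (σ : Equiv.Perm (Fin n))
    (h0 : σ ⟨0, by omega⟩ = ⟨0, by omega⟩)
    (hlast : σ ⟨n - 1, by omega⟩ = ⟨n - 1, by omega⟩)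
    (U : Set (Fin n))
    (hU : U = {v : Fin n | ∃ b₁ b₂ : Fin n,
      oldEdge v b₁ ∧ newEdge σ v b₂ ∧ b₁ ≠ b₂}) :
    ∀ W ⊆ U, (∀ u' v' : Fin n, u' ∈ U → v' ∈ W → σ.symm v' < σ.symm u' → u' ∈ W) →
      ∀ l : List (Fin n),
        ¬ IsCycle (fun a b =>
            (a ∈ W ∧ newEdge σ a b) ∨ (a ∉ W ∧ oldEdge a b)) l := by
  intro W hWU hcl l hcyc
  obtain ⟨hne, hnodup, hedge⟩ := hcyc
  have hlen : 0 < l.length := List.length_pos_iff.mpr hne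
  have hgeteq : ∀ (x y : ℕ) (hx : x < l.length) (hy : y < l.length), x = y →
      l.get ⟨x, hx⟩ = l.get ⟨y, hy⟩ := by
    intro x y hx hy h; subst h; rfl
  by_cases hW : ∀ i : Fin l.length, l.get i ∉ W
  · -- all edges are old edges: the value strictly increases around the cycle
    refine no_incr_cycle (fun a : Fin n => (a : ℕ)) l hne (fun i => ?_)
    rcases hedge i with ⟨hmem, -⟩ | ⟨-, hold⟩
    · exact absurd hmem (hW i)
    · unfold oldEdge at hold; omega
  · push_neg at hW
    obtain ⟨i₀, hi₀⟩ := hW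
    set w := l.get i₀ with hw
    -- key step lemma
    have key : ∀ a b : Fin n, (σ.symm w : ℕ) ≤ (σ.symm a : ℕ) →
        ((a ∈ W ∧ newEdge σ a b) ∨ (a ∉ W ∧ oldEdge a b)) →
        (σ.symm b : ℕ) = (σ.symm a : ℕ) + 1 := by
      intro a b hge hab
      rcases hab with ⟨-, k, hk, hka, hkb⟩ | ⟨haW, hold⟩
      · rw [← hka, ← hkb, Equiv.symm_apply_apply, Equiv.symm_apply_apply]
      · -- a ∉ W and (σ.symm w) ≤ (σ.symm a) forces a ∉ U
        have haU : a ∉ U := by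
          intro haU
          rcases lt_or_eq_of_le hge with hlt | heq
          · exact haW (hcl a w haU hi₀ (Fin.lt_def.mpr hlt))
          · have h1 : σ.symm a = σ.symm w := Fin.ext heq.symm
            exact haW ((σ.symm.injective h1) ▸ hi₀)
        have hb : (b : ℕ) < n := b.isLt
        have ha1 : (a : ℕ) + 1 < n := by unfold oldEdge at hold; omega
        have hsa : (σ.symm a : ℕ) + 1 < n := by
          by_contra h
          have h1 : (σ.symm a : ℕ) = n - 1 := by
            have := (σ.symm a).isLt; omega
          have h2 : σ.symm a = ⟨n - 1, by omega⟩ := Fin.ext h1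
          have h3 : a = σ ⟨n - 1, by omega⟩ := by rw [← h2, Equiv.apply_symm_apply]
          rw [hlast] at h3
          have : (a : ℕ) = n - 1 := by rw [h3]
          omega
        have hnew : newEdge σ a (σ ⟨(σ.symm a : ℕ) + 1, hsa⟩) := by
          refine ⟨(σ.symm a : ℕ), hsa, ?_, rfl⟩
          have : (⟨(σ.symm a : ℕ), Nat.lt_of_succ_lt hsa⟩ : Fin n) = σ.symm a := Fin.ext rfl
          rw [this, Equiv.apply_symm_apply]
        rw [hU] at haU
        simp only [Set.mem_setOf_eq, not_exists] at haU
        have hbe : b = σ ⟨(σ.symm a : ℕ) + 1, hsa⟩ := by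
          by_contra hne'
          exact haU b (σ ⟨(σ.symm a : ℕ) + 1, hsa⟩) ⟨hold, hnew, hne'⟩
        rw [hbe, Equiv.symm_apply_apply]
    -- from i₀ onwards, σ.symm-position stays ≥ σ.symm w
    have hall : ∀ j : ℕ, (σ.symm w : ℕ) ≤
        (σ.symm (l.get ⟨((i₀ : ℕ) + j) % l.length, Nat.mod_lt _ hlen⟩) : ℕ) := by
      intro j
      induction j with
      | zero =>
        have : l.get ⟨((i₀ : ℕ) + 0) % l.length, Nat.mod_lt _ hlen⟩ = w := by
          rw [hw]
          exact hgeteq _ _ _ _ (by rw [Nat.add_zero, Nat.mod_eq_of_lt i₀.isLt])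
        rw [this]
      | succ j ih =>
        have step := key _ _ ih
          (hedge ⟨((i₀ : ℕ) + j) % l.length, Nat.mod_lt _ hlen⟩)
        simp only [Fin.val_mk] at step
        have heq : l.get ⟨((i₀ : ℕ) + (j + 1)) % l.length, Nat.mod_lt _ hlen⟩
            = l.get ⟨(((i₀ : ℕ) + j) % l.length + 1) % l.length,
                Nat.mod_lt _ (Fin.pos ⟨((i₀ : ℕ) + j) % l.length, Nat.mod_lt _ hlen⟩)⟩ :=
          hgeteq _ _ _ _ (by rw [Nat.mod_add_mod, Nat.add_assoc])
        rw [heq]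
        omega
    -- hence every node of the cycle has σ.symm-position ≥ σ.symm w
    have hallidx : ∀ i : Fin l.length, (σ.symm w : ℕ) ≤ (σ.symm (l.get i) : ℕ) := by
      intro i
      have h1 := hall ((i : ℕ) + l.length - (i₀ : ℕ))
      have hmod : ((i₀ : ℕ) + ((i : ℕ) + l.length - (i₀ : ℕ))) % l.length = (i : ℕ) := by
        have h2 : (i₀ : ℕ) + ((i : ℕ) + l.length - (i₀ : ℕ)) = (i : ℕ) + l.length := by
          have := i₀.isLt; omega
        rw [h2, Nat.add_mod_right, Nat.mod_eq_of_lt i.isLt]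
      have h3 : l.get ⟨((i₀ : ℕ) + ((i : ℕ) + l.length - (i₀ : ℕ))) % l.length,
          Nat.mod_lt _ hlen⟩ = l.get i := by
        have := hgeteq _ _ (Nat.mod_lt _ hlen) (hmod ▸ i.isLt) hmod
        rw [this]
      rwa [h3] at h1
    -- σ.symm-position strictly increases around the cycle: contradiction
    exact no_incr_cycle (fun a => (σ.symm a : ℕ)) l hne (fun i => by
      have := key _ _ (hallidx i) (hedge i); omega)
end
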